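/- arXiv:2510.12147 — 4 statements merged into one kernel-verified Lean document; each statement's English description precedes it below -/
import Mathlib

section
/- Let H be a real inner product space, V ⊆ H a linear subspace, and a : V × V → ℝ a symmetric bilinear form with a(v, v) ≥ 0 for all v ∈ V. Fix T > 0 and a positive integer M; set Δt = T/M, tₙ = nΔt for n = 0, …, M, and Iₙ = (t_{n−1}, tₙ]. Let φ : [0,T] → H be strongly measurable with ∫₀ᵀ ‖φ(t)‖² dt < ∞, and let z₀, …, z_M ∈ V satisfy z_M = 0 and, for every n = 1, …, M and every w ∈ V, ⟨z_{n−1} − z_n, w⟩ + Δt · a(z_{n−1}, w) = ∫_{Iₙ} ⟨φ(t), w⟩ dt. Then a(z₀, z₀) + Σ_{n=1}^{M} Δt⁻¹ ‖z_n − z_{n−1}‖² ≤ Σ_{n=1}^{M} ∫_{Iₙ} ‖φ(t)‖² dt. -/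
open MeasureTheory
open scoped RealInnerProductSpace

/-- stability estimate for the backward-in-time backward Euler scheme
`⟨z_{n−1} − z_n, w⟩ + Δt a(z_{n−1}, w) = ∫_{Iₙ} ⟨φ(t), w⟩ dt` with `z_M = 0`:
`a(z₀,z₀) + Σ Δt⁻¹ ‖z_n − z_{n−1}‖² ≤ Σ ∫_{Iₙ} ‖φ‖²`. -/
theorem stmt_4
    {H : Type*} [NormedAddCommGroup H] [InnerProductSpace ℝ H]
    (V : Submodule ℝ H)
    (a : V →ₗ[ℝ] V →ₗ[ℝ] ℝ)
    (ha_symm : ∀ v w : V, a v w = a w v)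
    (ha_pos : ∀ v : V, 0 ≤ a v v)
    (T : ℝ) (hT : 0 < T) (M : ℕ) (hM : 0 < M)
    (Δt : ℝ) (hΔt : Δt = T / M)
    (tt : ℕ → ℝ) (htt : ∀ n, tt n = n * Δt)
    (φ : ℝ → H)
    (hφ_meas : AEStronglyMeasurable φ (volume.restrict (Set.Ioc (0 : ℝ) T)))
    (hφ_sq : IntegrableOn (fun t => ‖φ t‖ ^ 2) (Set.Ioc (0 : ℝ) T))
    (z : ℕ → V) (hzM : z M = 0)
    (hz : ∀ n ∈ Finset.Icc 1 M, ∀ w : V,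
      ⟪(z (n - 1) : H) - (z n : H), (w : H)⟫ + Δt * a (z (n - 1)) w
        = ∫ t in Set.Ioc (tt (n - 1)) (tt n), ⟪φ t, (w : H)⟫) :
    a (z 0) (z 0) + ∑ n ∈ Finset.Icc 1 M, Δt⁻¹ * ‖(z n : H) - (z (n - 1) : H)‖ ^ 2
      ≤ ∑ n ∈ Finset.Icc 1 M, ∫ t in Set.Ioc (tt (n - 1)) (tt n), ‖φ t‖ ^ 2 := by
  have hMR : (0:ℝ) < M := by exact_mod_cast hM
  have hΔtpos : 0 < Δt := by rw [hΔt]; positivity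
  have young : ∀ x y : ℝ, x * y ≤ Δt / 2 * x ^ 2 + (2 * Δt)⁻¹ * y ^ 2 := by
    intro x y
    have h4 : (0:ℝ) < 2 * Δt := by linarith
    have heq2 : Δt / 2 * x ^ 2 + (2 * Δt)⁻¹ * y ^ 2 - x * y
        = (Δt * x - y) ^ 2 / (2 * Δt) := by
      field_simp; ring
    have h5 := div_nonneg (sq_nonneg (Δt * x - y)) h4.le
    linarith [heq2 ▸ h5]
  set A : ℕ → ℝ := fun n => a (z n) (z n) with hA
  have key : ∀ n ∈ Finset.Icc 1 M,
      Δt⁻¹ * ‖(z n : H) - (z (n - 1) : H)‖ ^ 2 + (A (n - 1) - A n)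
        ≤ ∫ t in Set.Ioc (tt (n - 1)) (tt n), ‖φ t‖ ^ 2 := by
    intro n hn
    rw [Finset.mem_Icc] at hn
    obtain ⟨hn1, hnM⟩ := hn
    set w : V := z (n - 1) - z n with hw
    set wH : H := (z (n - 1) : H) - (z n : H) with hwH
    have hwcoe : (w : H) = wH := by simp [hw, hwH]
    have heq := hz n (Finset.mem_Icc.mpr ⟨hn1, hnM⟩) w
    rw [hwcoe, ← hwH, real_inner_self_eq_norm_sq] at heq
    -- energy expansion
    have hexp : (A (n - 1) - A n) / 2 ≤ a (z (n - 1)) w := by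
      have h0 := ha_pos w
      have h1 : a w w = A (n - 1) - 2 * a (z (n - 1)) (z n) + A n := by
        simp only [hw, map_sub, LinearMap.sub_apply]
        rw [ha_symm (z n) (z (n - 1))]
        simp only [hA]
        try ring
      have h2 : a (z (n - 1)) w = A (n - 1) - a (z (n - 1)) (z n) := by
        simp only [hw, map_sub]
        try rfl
      rw [h1] at h0
      linarith
    -- interval facts
    have hcast : ((n - 1 : ℕ) : ℝ) = (n : ℝ) - 1 := by
      rw [Nat.cast_sub hn1]; norm_num
    have httd : tt n - tt (n - 1) = Δt := by
      rw [htt, htt, hcast]; ring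
    have httnn : 0 ≤ tt (n - 1) := by
      rw [htt]; positivity
    have httT : tt n ≤ T := by
      rw [htt]
      have hnle : (n : ℝ) ≤ (M : ℝ) := by exact_mod_cast hnM
      calc (n : ℝ) * Δt ≤ (M : ℝ) * Δt := by nlinarith
        _ = T := by rw [hΔt]; field_simp
    have hsub : Set.Ioc (tt (n - 1)) (tt n) ⊆ Set.Ioc (0 : ℝ) T :=
      Set.Ioc_subset_Ioc httnn httT
    have hvol : (volume (Set.Ioc (tt (n - 1)) (tt n))).toReal = Δt := by
      rw [Real.volume_Ioc, ENNReal.toReal_ofReal (by linarith [httd])]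
      linarith [httd]
    have hφ2 : IntegrableOn (fun t => ‖φ t‖ ^ 2) (Set.Ioc (tt (n - 1)) (tt n)) :=
      hφ_sq.mono_set hsub
    have hφm : AEStronglyMeasurable φ
        (volume.restrict (Set.Ioc (tt (n - 1)) (tt n))) :=
      hφ_meas.mono_measure (Measure.restrict_mono hsub le_rfl)
    have hconst : IntegrableOn (fun _ : ℝ => (2 * Δt)⁻¹ * ‖wH‖ ^ 2)
        (Set.Ioc (tt (n - 1)) (tt n)) :=
      integrableOn_const measure_Ioc_lt_top.ne
    have hg : IntegrableOn
        (fun t => Δt / 2 * ‖φ t‖ ^ 2 + (2 * Δt)⁻¹ * ‖wH‖ ^ 2)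
        (Set.Ioc (tt (n - 1)) (tt n)) :=
      (hφ2.const_mul _).add hconst
    have hptwise : ∀ t, ⟪φ t, wH⟫ ≤ Δt / 2 * ‖φ t‖ ^ 2 + (2 * Δt)⁻¹ * ‖wH‖ ^ 2 :=
      fun t => (real_inner_le_norm _ _).trans (young ‖φ t‖ ‖wH‖)
    have hint : IntegrableOn (fun t => ⟪φ t, wH⟫) (Set.Ioc (tt (n - 1)) (tt n)) := by
      refine hg.mono'
        (AEStronglyMeasurable.inner (𝕜 := ℝ) hφm aestronglyMeasurable_const) ?_
      filter_upwards with t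
      have h1 : |⟪φ t, wH⟫| ≤ ‖φ t‖ * ‖wH‖ := abs_real_inner_le_norm _ _
      rw [Real.norm_eq_abs]
      exact h1.trans (young ‖φ t‖ ‖wH‖)
    have hb1 : (∫ t in Set.Ioc (tt (n - 1)) (tt n), ⟪φ t, wH⟫)
        ≤ ∫ t in Set.Ioc (tt (n - 1)) (tt n),
            (Δt / 2 * ‖φ t‖ ^ 2 + (2 * Δt)⁻¹ * ‖wH‖ ^ 2) :=
      integral_mono hint hg fun t => hptwise t
    have hb2 : (∫ t in Set.Ioc (tt (n - 1)) (tt n),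
            (Δt / 2 * ‖φ t‖ ^ 2 + (2 * Δt)⁻¹ * ‖wH‖ ^ 2))
        = Δt / 2 * (∫ t in Set.Ioc (tt (n - 1)) (tt n), ‖φ t‖ ^ 2)
          + (2 * Δt)⁻¹ * ‖wH‖ ^ 2 * Δt := by
      rw [integral_add (hφ2.const_mul _) hconst, integral_const_mul,
        setIntegral_const, measureReal_def, hvol, smul_eq_mul]
      ring
    -- combine
    have hmul := mul_le_mul_of_nonneg_left hexp hΔtpos.le
    have hle : ‖wH‖ ^ 2 + Δt * a (z (n - 1)) w
        ≤ Δt / 2 * (∫ t in Set.Ioc (tt (n - 1)) (tt n), ‖φ t‖ ^ 2)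
          + (2 * Δt)⁻¹ * ‖wH‖ ^ 2 * Δt :=
      heq.le.trans (hb1.trans hb2.le)
    have hc : (2 * Δt)⁻¹ * ‖wH‖ ^ 2 * Δt = 1 / 2 * ‖wH‖ ^ 2 := by
      field_simp
    have hS' : 1 / 2 * ‖wH‖ ^ 2 + Δt / 2 * (A (n - 1) - A n)
        ≤ Δt / 2 * (∫ t in Set.Ioc (tt (n - 1)) (tt n), ‖φ t‖ ^ 2) := by
      rw [hc] at hle
      linarith [hmul, hle]
    have hnormrev : ‖(z n : H) - (z (n - 1) : H)‖ = ‖wH‖ := by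
      rw [hwH, norm_sub_rev]
    rw [hnormrev, show Δt⁻¹ * ‖wH‖ ^ 2 + (A (n - 1) - A n)
        = (‖wH‖ ^ 2 + Δt * (A (n - 1) - A n)) / Δt from by field_simp,
      div_le_iff₀ hΔtpos]
    linarith [hS']
  -- sum up
  have hsum := Finset.sum_le_sum key
  rw [Finset.sum_add_distrib] at hsum
  have hAM : A M = 0 := by simp [hA, hzM]
  have htel : ∑ n ∈ Finset.Icc 1 M, (A (n - 1) - A n) = A 0 := by
    rw [show Finset.Icc 1 M = Finset.Ico 1 (M + 1) from rfl, Finset.sum_Ico_eq_sum_range]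
    simp only [Nat.add_sub_cancel]
    have hcg : ∀ i ∈ Finset.range M, A (1 + i - 1) - A (1 + i) = A i - A (i + 1) := by
      intro i _
      congr 2 <;> omega
    rw [Finset.sum_congr rfl hcg, Finset.sum_range_sub' A M, hAM, sub_zero]
  rw [htel] at hsum
  have hA0 : A 0 = a (z 0) (z 0) := rfl
  rw [hA0] at hsum
  linarith
end

section
/- Let E be a real Banach space. Fix T > 0 and a positive integer M; set Δt = T/M, tₙ = nΔt for n = 0, …, M, and Iₙ = (t_{n−1}, tₙ]. Let v, v′ : [0,T] → E be such that v′ is Bochner integrable, ∫₀ᵀ ‖v′(t)‖² dt < ∞, and v(t) = v(0) + ∫₀ᵗ v′(s) ds for every t ∈ [0,T]. Then Σ_{n=1}^{M} Δt ‖v(tₙ) − Δt⁻¹ ∫_{Iₙ} v(t) dt‖² ≤ Δt² ∫₀ᵀ ‖v′(t)‖² dt. -/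
open MeasureTheory

/-- Cauchy–Schwarz for integrals against a finite measure:
`(∫ f)² ≤ μ(univ) * ∫ f²`. -/
private lemma cs_aux {α : Type*} [MeasurableSpace α] (μ : Measure α) [IsFiniteMeasure μ]
    {f : α → ℝ} (hf : Integrable f μ) (hf2 : Integrable (fun x => f x ^ 2) μ) :
    (∫ x, f x ∂μ) ^ 2 ≤ (μ Set.univ).toReal * ∫ x, f x ^ 2 ∂μ := by
  set m := (μ Set.univ).toReal with hm
  have hm0 : 0 ≤ m := ENNReal.toReal_nonneg
  set A := ∫ x, f x ∂μ with hA
  rcases eq_or_lt_of_le hm0 with h0 | hpos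
  · have hfin := (measure_lt_top μ Set.univ).ne
    have hμ0 : μ Set.univ = 0 := by
      have h0' : (μ Set.univ).toReal = 0 := h0.symm
      exact ((ENNReal.toReal_eq_zero_iff _).mp h0').resolve_right hfin
    have hz : μ = 0 := Measure.measure_univ_eq_zero.mp hμ0
    simp [hA, hz]
  · set c := A / m with hc
    have key : (0:ℝ) ≤ ∫ x, (f x - c) ^ 2 ∂μ := integral_nonneg fun x => sq_nonneg _
    have expand : ∫ x, (f x - c) ^ 2 ∂μ
        = (∫ x, f x ^ 2 ∂μ) - 2 * c * A + c ^ 2 * m := by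
      have h1 : (fun x => (f x - c) ^ 2)
          = fun x => f x ^ 2 - 2 * c * f x + c ^ 2 := by ext x; ring
      rw [h1, integral_add (f := fun x => f x ^ 2 - 2 * c * f x) (g := fun _ => c ^ 2)
        (hf2.sub (hf.const_mul _)) (integrable_const _),
        integral_sub (f := fun x => f x ^ 2) (g := fun x => 2 * c * f x) hf2
        (hf.const_mul _), integral_const_mul, integral_const]
      simp only [smul_eq_mul, measureReal_def, ← hA, ← hm]
      ring
    have hAc : A = c * m := by rw [hc, div_mul_cancel₀ _ hpos.ne']
    have hcA : 2 * c * A = 2 * (c ^ 2 * m) := by rw [hAc]; ring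
    have h2 : c ^ 2 * m ≤ ∫ x, f x ^ 2 ∂μ := by linarith [key, expand.symm.le, expand.le]
    calc A ^ 2 = c ^ 2 * m * m := by rw [hAc]; ring
      _ ≤ (∫ x, f x ^ 2 ∂μ) * m := mul_le_mul_of_nonneg_right h2 hm0
      _ = m * ∫ x, f x ^ 2 ∂μ := mul_comm _ _

/-- error estimate for the time-averaging interpolant
`P̄ₖⁿ v = Δt⁻¹ ∫_{Iₙ} v dt`:
`Σ Δt ‖v(tₙ) − Δt⁻¹ ∫_{Iₙ} v‖² ≤ Δt² ∫₀ᵀ ‖v′‖²`. -/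
theorem stmt_5
    {E : Type*} [NormedAddCommGroup E] [NormedSpace ℝ E] [CompleteSpace E]
    (T : ℝ) (hT : 0 < T) (M : ℕ) (hM : 0 < M)
    (Δt : ℝ) (hΔt : Δt = T / M)
    (tt : ℕ → ℝ) (htt : ∀ n, tt n = n * Δt)
    (v v' : ℝ → E)
    (hv'int : IntegrableOn v' (Set.Icc 0 T))
    (hv'sq : IntegrableOn (fun t => ‖v' t‖ ^ 2) (Set.Icc 0 T))
    (hv : ∀ t ∈ Set.Icc (0 : ℝ) T, v t = v 0 + ∫ s in (0 : ℝ)..t, v' s) :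
    ∑ n ∈ Finset.Icc 1 M,
        Δt * ‖v (tt n) - Δt⁻¹ • ∫ t in Set.Ioc (tt (n - 1)) (tt n), v t‖ ^ 2
      ≤ Δt ^ 2 * ∫ t in Set.Ioc (0 : ℝ) T, ‖v' t‖ ^ 2 := by
  have hMpos : (0:ℝ) < M := by exact_mod_cast hM
  have hΔpos : 0 < Δt := by rw [hΔt]; positivity
  have htt0 : tt 0 = 0 := by simp [htt]
  have httM : tt M = T := by rw [htt, hΔt]; field_simp
  have httmem : ∀ n ≤ M, tt n ∈ Set.Icc (0:ℝ) T := by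
    intro n hn
    rw [htt]
    constructor
    · positivity
    · rw [hΔt]
      calc (n:ℝ) * (T/M) ≤ M * (T/M) := by
            apply mul_le_mul_of_nonneg_right _ (by positivity)
            exact_mod_cast hn
        _ = T := by field_simp
  -- continuity and integrability of v on [0,T]
  have hwcont : ContinuousOn (fun x => v 0 + ∫ s in (0:ℝ)..x, v' s) (Set.Icc 0 T) := by
    refine continuousOn_const.add ?_
    have h := intervalIntegral.continuousOn_primitive_interval (a := 0) (b := T)
      (μ := volume) (f := v') (by rwa [Set.uIcc_of_le hT.le])
    rwa [Set.uIcc_of_le hT.le] at h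
  have hvcont : ContinuousOn v (Set.Icc 0 T) := hwcont.congr hv
  have hvint : IntegrableOn v (Set.Icc 0 T) := hvcont.integrableOn_Icc
  -- interval integrability of v' on subintervals
  have hIi : ∀ a b : ℝ, a ∈ Set.Icc (0:ℝ) T → b ∈ Set.Icc (0:ℝ) T → a ≤ b →
      IntervalIntegrable v' volume a b := by
    intro a b ha hb hab
    apply IntegrableOn.intervalIntegrable
    rw [Set.uIcc_of_le hab]
    exact hv'int.mono_set (Set.Icc_subset_Icc ha.1 hb.2)
  -- the per-interval estimate
  have perInt : ∀ n ∈ Finset.Icc 1 M,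
      Δt * ‖v (tt n) - Δt⁻¹ • ∫ t in Set.Ioc (tt (n - 1)) (tt n), v t‖ ^ 2
        ≤ Δt ^ 2 * ∫ s in (tt (n-1))..(tt n), ‖v' s‖ ^ 2 := by
    intro n hn
    obtain ⟨hn1, hnM⟩ := Finset.mem_Icc.mp hn
    set a := tt (n - 1) with ha
    set b := tt n with hb
    have hba : b - a = Δt := by
      rw [hb, ha, htt, htt, Nat.cast_sub hn1]
      push_cast
      ring
    have hab : a ≤ b := by nlinarith
    have haT : a ∈ Set.Icc (0:ℝ) T := httmem _ (le_trans (Nat.sub_le n 1) hnM)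
    have hbT : b ∈ Set.Icc (0:ℝ) T := httmem n hnM
    have hIocsub : Set.Ioc a b ⊆ Set.Icc (0:ℝ) T := fun t ht =>
      ⟨le_trans haT.1 ht.1.le, le_trans ht.2 hbT.2⟩
    have hv'i : IntervalIntegrable v' volume a b := hIi a b haT hbT hab
    have hv'norm_i : IntervalIntegrable (fun s => ‖v' s‖) volume a b := hv'i.norm
    set N := ∫ s in a..b, ‖v' s‖ with hN
    have hNnonneg : 0 ≤ N :=
      intervalIntegral.integral_nonneg hab (fun _ _ => norm_nonneg _)
    -- pointwise bound
    have hbound : ∀ t ∈ Set.Ioc a b, ‖v b - v t‖ ≤ N := by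
      intro t ht
      have htmem : t ∈ Set.Icc (0:ℝ) T := hIocsub ht
      have h1 : v b - v t = ∫ s in t..b, v' s := by
        rw [hv b hbT, hv t htmem, add_sub_add_left_eq_sub,
          intervalIntegral.integral_interval_sub_left
            (hIi 0 b ⟨le_rfl, hT.le⟩ hbT hbT.1) (hIi 0 t ⟨le_rfl, hT.le⟩ htmem htmem.1)]
      rw [h1]
      calc ‖∫ s in t..b, v' s‖ ≤ ∫ s in t..b, ‖v' s‖ :=
            intervalIntegral.norm_integral_le_integral_norm ht.2
        _ ≤ N := by
            apply intervalIntegral.integral_mono_interval ht.1.le ht.2 le_rfl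
              (Filter.Eventually.of_forall fun _ => norm_nonneg _) hv'norm_i
    -- measure of the interval
    have hμ : volume (Set.Ioc a b) = ENNReal.ofReal Δt := by
      rw [Real.volume_Ioc, hba]
    have hμfin : volume (Set.Ioc a b) < ⊤ := by rw [hμ]; exact ENNReal.ofReal_lt_top
    have hmeasr : (volume (Set.Ioc a b)).toReal = Δt := by
      rw [hμ, ENNReal.toReal_ofReal hΔpos.le]
    have hvint' : IntegrableOn v (Set.Ioc a b) := hvint.mono_set hIocsub
    -- rewrite the difference as an averaged integral
    have hkey : v b - Δt⁻¹ • ∫ t in Set.Ioc a b, v t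
        = Δt⁻¹ • ∫ t in Set.Ioc a b, (v b - v t) := by
      rw [integral_sub (integrableOn_const (C := v b) hμfin.ne) hvint',
        setIntegral_const, measureReal_def, hmeasr, smul_sub, smul_smul,
        inv_mul_cancel₀ hΔpos.ne', one_smul]
    have hnormle : ‖v b - Δt⁻¹ • ∫ t in Set.Ioc a b, v t‖ ≤ N := by
      rw [hkey, norm_smul, Real.norm_eq_abs, abs_of_pos (inv_pos.mpr hΔpos)]
      have hle := norm_setIntegral_le_of_norm_le_const (μ := volume)
        (s := Set.Ioc a b) (f := fun t => v b - v t) hμfin hbound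
      rw [measureReal_def, hmeasr] at hle
      calc Δt⁻¹ * ‖∫ t in Set.Ioc a b, (v b - v t)‖ ≤ Δt⁻¹ * (N * Δt) := by
            apply mul_le_mul_of_nonneg_left hle (by positivity)
        _ = N := by field_simp
    -- Cauchy–Schwarz
    haveI : IsFiniteMeasure (volume.restrict (Set.Ioc a b)) :=
      ⟨by rw [Measure.restrict_apply_univ]; exact hμfin⟩
    have hcs : N ^ 2 ≤ Δt * ∫ s in Set.Ioc a b, ‖v' s‖ ^ 2 := by
      have h1 : N = ∫ s in Set.Ioc a b, ‖v' s‖ := by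
        rw [hN, intervalIntegral.integral_of_le hab]
      have h2 := cs_aux (volume.restrict (Set.Ioc a b))
        (f := fun s => ‖v' s‖) hv'i.1.norm (hv'sq.mono_set hIocsub)
      rw [Measure.restrict_apply_univ, hmeasr] at h2
      rw [h1]
      exact h2
    have hsqIoc : ∫ s in Set.Ioc a b, ‖v' s‖ ^ 2 = ∫ s in a..b, ‖v' s‖ ^ 2 :=
      (intervalIntegral.integral_of_le hab).symm
    calc Δt * ‖v b - Δt⁻¹ • ∫ t in Set.Ioc a b, v t‖ ^ 2
        ≤ Δt * N ^ 2 := by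
          apply mul_le_mul_of_nonneg_left _ hΔpos.le
          exact pow_le_pow_left₀ (norm_nonneg _) hnormle 2
      _ ≤ Δt * (Δt * ∫ s in Set.Ioc a b, ‖v' s‖ ^ 2) :=
          mul_le_mul_of_nonneg_left hcs hΔpos.le
      _ = Δt ^ 2 * ∫ s in a..b, ‖v' s‖ ^ 2 := by rw [hsqIoc]; ring
  -- sum up
  have hsum : ∑ n ∈ Finset.Icc 1 M, (Δt ^ 2 * ∫ s in (tt (n-1))..(tt n), ‖v' s‖ ^ 2)
      = Δt ^ 2 * ∫ t in Set.Ioc (0:ℝ) T, ‖v' t‖ ^ 2 := by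
    rw [← Finset.mul_sum]
    congr 1
    have hre : ∑ n ∈ Finset.Icc 1 M, (∫ s in (tt (n-1))..(tt n), ‖v' s‖ ^ 2)
        = ∑ i ∈ Finset.range M, ∫ s in (tt i)..(tt (i+1)), ‖v' s‖ ^ 2 := by
      rw [← Finset.Ico_add_one_right_eq_Icc, Finset.sum_Ico_eq_sum_range]
      refine Finset.sum_congr (by simp) fun i _ => ?_
      rw [show 1 + i - 1 = i by omega, show 1 + i = i + 1 by omega]
    rw [hre]
    have hadj : ∀ k < M, IntervalIntegrable (fun s => ‖v' s‖ ^ 2) volume (tt k) (tt (k+1)) := by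
      intro k hk
      apply IntegrableOn.intervalIntegrable
      have hk1 : tt k ≤ tt (k+1) := by
        rw [htt, htt]; push_cast; nlinarith
      rw [Set.uIcc_of_le hk1]
      exact hv'sq.mono_set (Set.Icc_subset_Icc (httmem k (le_of_lt hk)).1
        (httmem (k+1) hk).2)
    rw [intervalIntegral.sum_integral_adjacent_intervals hadj, htt0, httM,
      intervalIntegral.integral_of_le hT.le]
  calc ∑ n ∈ Finset.Icc 1 M,
        Δt * ‖v (tt n) - Δt⁻¹ • ∫ t in Set.Ioc (tt (n - 1)) (tt n), v t‖ ^ 2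
      ≤ ∑ n ∈ Finset.Icc 1 M, (Δt ^ 2 * ∫ s in (tt (n-1))..(tt n), ‖v' s‖ ^ 2) :=
        Finset.sum_le_sum perInt
    _ = Δt ^ 2 * ∫ t in Set.Ioc (0:ℝ) T, ‖v' t‖ ^ 2 := hsum
end

section
/- Let H be a real Hilbert space, V ⊆ H a finite-dimensional linear subspace, X ⊆ H a linear subspace with V ⊆ X, and a : X × X → ℝ a symmetric bilinear form. Fix T > 0 and a positive integer M; set Δt = T/M, tₙ = nΔt for n = 0, …, M, and Iₙ = (t_{n−1}, tₙ]. Let R : X → V satisfy a(x − R x, w) = 0 for all x ∈ X and w ∈ V. Let y : [0,T] → X be such that t ↦ R(y(t)) is Bochner integrable and t ↦ a(y(t), w) is integrable for each w ∈ V, and let F(t) : V → ℝ be linear functionals such that t ↦ F(t)(w) is integrable for each w ∈ V. Assume that for each n = 1, …, M and all w ∈ V: ⟨y(tₙ) − y(t_{n−1}), w⟩ + ∫_{Iₙ} a(y(t), w) dt = ∫_{Iₙ} F(t)(w) dt. Let Y⁰, …, Y^M ∈ V satisfy Y⁰ = R(y(0)) and, for n = 1, …, M and all w ∈ V, ⟨Yⁿ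 − Y^{n−1}, w⟩ + Δt · a(Yⁿ, w) = ∫_{Iₙ} F(t)(w) dt. Set η̄ⁿ := Δt⁻¹ ∫_{Iₙ} R(y(t)) dt (which lies in V since V is finite-dimensional, hence closed) and θⁿ := η̄ⁿ − Yⁿ. Finally, let z⁰, …, z^M ∈ V satisfy z^M = 0 and, for n = 1, …, M and all w ∈ V, ⟨z^{n−1} − zⁿ, w⟩ + Δt · a(z^{n−1}, w) = Δt ⟨θⁿ, w⟩. Then Σ_{n=1}^{M} Δt ‖θⁿ‖² = Σ_{n=1}^{M} ⟨z^{n−1} − zⁿ, η̄ⁿ − y(tₙ)⟩ + ⟨y(0) − R(y(0)), z⁰⟩. -/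
open MeasureTheory
open scoped RealInnerProductSpace


private lemma tel_aux (g : ℕ → ℝ) (M : ℕ) :
    ∑ n ∈ Finset.Icc 1 M, (g (n - 1) - g n) = g 0 - g M := by
  induction M with
  | zero => simp
  | succ m ih =>
    rw [Finset.sum_Icc_succ_top (Nat.one_le_iff_ne_zero.mpr (Nat.succ_ne_zero m)), ih]
    simp


/-- error-representation identity (3.10) from the duality proof of
Theorem 3.1: with `R` the Ritz projection onto the finite-dimensional space `V`,
`η̄ⁿ = Δt⁻¹ ∫_{Iₙ} R(y(t)) dt`, `θⁿ = η̄ⁿ − Yⁿ`, and `z` the auxiliary backward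
scheme with source `θ`, one has
`Σ Δt ‖θⁿ‖² = Σ ⟨z^{n−1} − zⁿ, η̄ⁿ − y(tₙ)⟩ + ⟨y(0) − R(y(0)), z⁰⟩`. -/
theorem stmt_9
    {H : Type*} [NormedAddCommGroup H] [InnerProductSpace ℝ H] [CompleteSpace H]
    (V X : Submodule ℝ H) (hVX : V ≤ X) [FiniteDimensional ℝ V]
    (a : X →ₗ[ℝ] X →ₗ[ℝ] ℝ) (ha_symm : ∀ v w : X, a v w = a w v)
    (T : ℝ) (hT : 0 < T) (M : ℕ) (hM : 0 < M)
    (Δt : ℝ) (hΔt : Δt = T / M)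
    (tt : ℕ → ℝ) (htt : ∀ n, tt n = n * Δt)
    (R : X → V)
    (hR : ∀ (x : X) (w : V),
      a (x - Submodule.inclusion hVX (R x)) (Submodule.inclusion hVX w) = 0)
    (y : ℝ → X)
    (hRy_int : IntegrableOn (fun t => R (y t)) (Set.Icc 0 T))
    (hay_int : ∀ w : V,
      IntegrableOn (fun t => a (y t) (Submodule.inclusion hVX w)) (Set.Icc 0 T))
    (F : ℝ → (V →ₗ[ℝ] ℝ))
    (hF_int : ∀ w : V, IntegrableOn (fun t => F t w) (Set.Icc 0 T))
    (hy : ∀ n ∈ Finset.Icc 1 M, ∀ w : V,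
      ⟪(y (tt n) : H) - (y (tt (n - 1)) : H), (w : H)⟫
          + ∫ t in Set.Ioc (tt (n - 1)) (tt n), a (y t) (Submodule.inclusion hVX w)
        = ∫ t in Set.Ioc (tt (n - 1)) (tt n), F t w)
    (Y : ℕ → V) (hY0 : Y 0 = R (y 0))
    (hY : ∀ n ∈ Finset.Icc 1 M, ∀ w : V,
      ⟪(Y n : H) - (Y (n - 1) : H), (w : H)⟫
          + Δt * a (Submodule.inclusion hVX (Y n)) (Submodule.inclusion hVX w)
        = ∫ t in Set.Ioc (tt (n - 1)) (tt n), F t w)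
    (η θ : ℕ → V)
    (hη : ∀ n, η n = Δt⁻¹ • ∫ t in Set.Ioc (tt (n - 1)) (tt n), R (y t))
    (hθ : ∀ n, θ n = η n - Y n)
    (z : ℕ → V) (hzM : z M = 0)
    (hz : ∀ n ∈ Finset.Icc 1 M, ∀ w : V,
      ⟪(z (n - 1) : H) - (z n : H), (w : H)⟫
          + Δt * a (Submodule.inclusion hVX (z (n - 1))) (Submodule.inclusion hVX w)
        = Δt * ⟪(θ n : H), (w : H)⟫) :
    ∑ n ∈ Finset.Icc 1 M, Δt * ‖(θ n : H)‖ ^ 2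
      = (∑ n ∈ Finset.Icc 1 M,
            ⟪(z (n - 1) : H) - (z n : H), (η n : H) - (y (tt n) : H)⟫)
        + ⟪(y 0 : H) - ((R (y 0) : V) : H), (z 0 : H)⟫ := by
  have hΔt_pos : 0 < Δt := by rw [hΔt]; positivity
  have hΔt_ne : Δt ≠ 0 := ne_of_gt hΔt_pos
  have htt0 : tt 0 = 0 := by simp [htt]
  -- per-step identity
  have key : ∀ n ∈ Finset.Icc 1 M,
      Δt * ‖(θ n : H)‖ ^ 2
        = ⟪(z (n - 1) : H) - (z n : H), (η n : H) - (y (tt n) : H)⟫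
          + (⟪(y (tt (n - 1)) : H) - (Y (n - 1) : H), (z (n - 1) : H)⟫
             - ⟪(y (tt n) : H) - (Y n : H), (z n : H)⟫) := by
    intro n hn
    obtain ⟨hn1, hnM⟩ := Finset.mem_Icc.mp hn
    -- integrability on Iₙ
    have hsubn : Set.Ioc (tt (n - 1)) (tt n) ⊆ Set.Icc 0 T := by
      have h1 : (0 : ℝ) ≤ tt (n - 1) := by rw [htt]; positivity
      have h2 : tt n ≤ T := by
        rw [htt, hΔt]
        have hnm : (n : ℝ) ≤ (M : ℝ) := by exact_mod_cast hnM
        have hM0 : (M : ℝ) ≠ 0 := by exact_mod_cast hM.ne'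
        calc (n : ℝ) * (T / M) ≤ (M : ℝ) * (T / M) :=
              mul_le_mul_of_nonneg_right hnm (by positivity)
          _ = T := by field_simp
      exact Set.Ioc_subset_Icc_self.trans (Set.Icc_subset_Icc h1 h2)
    have hRy_n : IntegrableOn (fun t => R (y t)) (Set.Ioc (tt (n - 1)) (tt n)) :=
      hRy_int.mono_set hsubn
    -- the continuous linear functional v ↦ a v (z (n-1)) on V
    set L : ↥V →L[ℝ] ℝ :=
      LinearMap.toContinuousLinearMap
        ((a.flip (Submodule.inclusion hVX (z (n - 1)))).comp (Submodule.inclusion hVX)) with hLdef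
    have hL : ∀ v : V, L v
        = a (Submodule.inclusion hVX v) (Submodule.inclusion hVX (z (n - 1))) := fun v => rfl
    have hηn : Δt • η n = ∫ t in Set.Ioc (tt (n - 1)) (tt n), R (y t) := by
      rw [hη n, smul_smul, mul_inv_cancel₀ hΔt_ne, one_smul]
    have h1 : (∫ t in Set.Ioc (tt (n - 1)) (tt n), a (y t) (Submodule.inclusion hVX (z (n - 1))))
        = ∫ t in Set.Ioc (tt (n - 1)) (tt n), L (R (y t)) := by
      have hfun : (fun t => a (y t) (Submodule.inclusion hVX (z (n - 1))))
          = fun t => L (R (y t)) := by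
        funext t
        rw [hL]
        have h := hR (y t) (z (n - 1))
        rw [map_sub, LinearMap.sub_apply] at h
        linarith
      rw [hfun]
    have h2 : (∫ t in Set.Ioc (tt (n - 1)) (tt n), L (R (y t)))
        = L (∫ t in Set.Ioc (tt (n - 1)) (tt n), R (y t)) :=
      L.integral_comp_comm hRy_n
    have haη : Δt * a (Submodule.inclusion hVX (η n)) (Submodule.inclusion hVX (z (n - 1)))
        = ∫ t in Set.Ioc (tt (n - 1)) (tt n), a (y t) (Submodule.inclusion hVX (z (n - 1))) := by
      rw [h1, h2, ← hηn, _root_.map_smul, smul_eq_mul, hL]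
    -- Δt * a(z^{n-1}, θⁿ)
    have hexp : a (Submodule.inclusion hVX (z (n - 1))) (Submodule.inclusion hVX (θ n))
        = a (Submodule.inclusion hVX (η n)) (Submodule.inclusion hVX (z (n - 1)))
          - a (Submodule.inclusion hVX (Y n)) (Submodule.inclusion hVX (z (n - 1))) := by
      rw [hθ n, map_sub, map_sub,
        ha_symm _ (Submodule.inclusion hVX (η n)),
        ha_symm _ (Submodule.inclusion hVX (Y n))]
    have haz : Δt * a (Submodule.inclusion hVX (z (n - 1))) (Submodule.inclusion hVX (θ n))
        = ⟪(Y n : H) - (Y (n - 1) : H), (z (n - 1) : H)⟫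
          - ⟪(y (tt n) : H) - (y (tt (n - 1)) : H), (z (n - 1) : H)⟫ := by
      rw [hexp, mul_sub, haη]
      linarith [hy n hn (z (n - 1)), hY n hn (z (n - 1))]
    have hz' := hz n hn (θ n)
    rw [real_inner_self_eq_norm_sq] at hz'
    have hmain : Δt * ‖(θ n : H)‖ ^ 2
        = ⟪(z (n - 1) : H) - (z n : H), (θ n : H)⟫
          + (⟪(Y n : H) - (Y (n - 1) : H), (z (n - 1) : H)⟫
             - ⟪(y (tt n) : H) - (y (tt (n - 1)) : H), (z (n - 1) : H)⟫) := by
      linarith [hz', haz]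
    have hθc : (θ n : H) = (η n : H) - (Y n : H) := by
      rw [hθ n]; rfl
    rw [hmain, hθc]
    simp only [inner_sub_left, inner_sub_right]
    linarith [real_inner_comm ((z (n - 1) : H)) ((Y n : H)),
      real_inner_comm ((z (n - 1) : H)) ((y (tt n) : H)),
      real_inner_comm ((z n : H)) ((y (tt n) : H)),
      real_inner_comm ((z n : H)) ((Y n : H))]
  rw [Finset.sum_congr rfl key, Finset.sum_add_distrib]
  congr 1
  have := tel_aux (fun k => ⟪(y (tt k) : H) - (Y k : H), (z k : H)⟫) M
  rw [this, htt0, hY0, hzM]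
  simp
end

section
/- Let H be a real inner product space, V ⊆ H a linear subspace, a : V × V → ℝ a symmetric bilinear form, U a real vector space, and b : U × V → ℝ a bilinear map. Fix T > 0 and a positive integer M; set Δt = T/M, tₙ = nΔt for n = 0, …, M, and Iₙ = (t_{n−1}, tₙ]. Let d : [0,T] → U be such that t ↦ b(d(t), w) is integrable on [0,T] for each w ∈ V, and let g : [0,T] → H be such that t ↦ ⟨g(t), w⟩ is integrable for each w ∈ V. Let e⁰, …, e^M ∈ V and q⁰, …, q^M ∈ V satisfy e⁰ = 0, q^M = 0, and for each n = 1, …, M and all w ∈ V: ⟨eⁿ − e^{n−1}, w⟩ + Δt · a(eⁿ, w) = ∫_{Iₙ} b(d(t), w) dt, and ⟨q^{n−1} − qⁿ, w⟩ + Δt · a(q^{n−1}, w) = ∫_{Iₙ} ⟨g(t), w⟩ dt. Then Σ_{n=1}^{M} ∫_{Iₙ} b(d(t), q^{n−1}) dt = Σ_{n=1}^{M} ∫_{Iₙ} ⟨g(t), eⁿ⟩ dt. -/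
open MeasureTheory
open scoped RealInnerProductSpace

/-- discrete duality identity from the proof of Theorem 4.3: testing the
discrete state-error scheme and the discrete adjoint-error scheme with each other and
summing over `n` yields `Σ ∫_{Iₙ} b(d(t), q^{n−1}) dt = Σ ∫_{Iₙ} ⟨g(t), eⁿ⟩ dt`. -/
theorem stmt_10
    {H : Type*} [NormedAddCommGroup H] [InnerProductSpace ℝ H]
    (V : Submodule ℝ H)
    (a : V →ₗ[ℝ] V →ₗ[ℝ] ℝ) (ha_symm : ∀ v w : V, a v w = a w v)
    {U : Type*} [AddCommGroup U] [Module ℝ U]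
    (b : U →ₗ[ℝ] V →ₗ[ℝ] ℝ)
    (T : ℝ) (hT : 0 < T) (M : ℕ) (hM : 0 < M)
    (Δt : ℝ) (hΔt : Δt = T / M)
    (tt : ℕ → ℝ) (htt : ∀ n, tt n = n * Δt)
    (d : ℝ → U)
    (hd_int : ∀ w : V, IntegrableOn (fun t => b (d t) w) (Set.Icc 0 T))
    (g : ℝ → H)
    (hg_int : ∀ w : V, IntegrableOn (fun t => ⟪g t, (w : H)⟫) (Set.Icc 0 T))
    (e q : ℕ → V) (he0 : e 0 = 0) (hqM : q M = 0)
    (he : ∀ n ∈ Finset.Icc 1 M, ∀ w : V,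
      ⟪(e n : H) - (e (n - 1) : H), (w : H)⟫ + Δt * a (e n) w
        = ∫ t in Set.Ioc (tt (n - 1)) (tt n), b (d t) w)
    (hq : ∀ n ∈ Finset.Icc 1 M, ∀ w : V,
      ⟪(q (n - 1) : H) - (q n : H), (w : H)⟫ + Δt * a (q (n - 1)) w
        = ∫ t in Set.Ioc (tt (n - 1)) (tt n), ⟪g t, (w : H)⟫) :
    ∑ n ∈ Finset.Icc 1 M, ∫ t in Set.Ioc (tt (n - 1)) (tt n), b (d t) (q (n - 1))
      = ∑ n ∈ Finset.Icc 1 M, ∫ t in Set.Ioc (tt (n - 1)) (tt n), ⟪g t, (e n : H)⟫ := by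

  set F : ℕ → ℝ := fun n => ⟪(e n : H), (q n : H)⟫ with hF
  have key : ∀ n ∈ Finset.Icc 1 M,
      (∫ t in Set.Ioc (tt (n - 1)) (tt n), b (d t) (q (n - 1)))
        - (∫ t in Set.Ioc (tt (n - 1)) (tt n), ⟪g t, (e n : H)⟫)
      = F n - F (n - 1) := by
    intro n hn
    rw [← he n hn (q (n - 1)), ← hq n hn (e n)]
    simp only [hF, inner_sub_left]
    rw [ha_symm (e n) (q (n - 1)), real_inner_comm ((q (n-1)) : H) ((e n) : H),
      real_inner_comm ((q n) : H) ((e n) : H)]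
    ring
  have hsum : ∑ n ∈ Finset.Icc 1 M,
      ((∫ t in Set.Ioc (tt (n - 1)) (tt n), b (d t) (q (n - 1)))
        - (∫ t in Set.Ioc (tt (n - 1)) (tt n), ⟪g t, (e n : H)⟫)) = 0 := by
    rw [Finset.sum_congr rfl key]
    have : ∑ n ∈ Finset.Icc 1 M, (F n - F (n - 1))
        = ∑ i ∈ Finset.range M, (F (i + 1) - F i) := by
      rw [← Finset.Ico_add_one_right_eq_Icc, Finset.sum_Ico_eq_sum_range]
      simp [add_comm]
    rw [this, Finset.sum_range_sub]
    simp [hF, he0, hqM]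
  rw [← sub_eq_zero, ← Finset.sum_sub_distrib]
  exact hsum
end
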